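/- arXiv:2502.01343 — 6 statements merged into one kernel-verified Lean document; each statement's English description precedes it below -/
import Mathlib

section
/- For all integers a, b and all nonnegative integers i, j: Σ_{l=0}^{∞} M₁(a)_{i,l} · M₁(b)_{l,j} = M₁(a+b)_{i,j}, where the sum has only finitely many nonzero terms (only l with i ≤ l ≤ j can contribute). -/
def s2 (n : ℕ) : ℕ := (Nat.digits 2 n).sum

/-- Entry of the matrix M₁(a): `(C(j,i) mod 2) * a^(s₂ j - s₂ i)` for `a ≠ 0`
(the entry is 0 when C(j,i) is even, in which case the truncated subtraction is harmless,
since oddness of C(j,i) forces s₂ i ≤ s₂ j); M₁(0) is the identity. -/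
def M1 (a : ℤ) (i j : ℕ) : ℤ :=
  if a = 0 then (if i = j then 1 else 0)
  else ((Nat.choose j i % 2 : ℕ) : ℤ) * a ^ (s2 j - s2 i)

lemma s2_bit (n r : ℕ) (hr : r < 2) : s2 (2 * n + r) = r + s2 n := by
  rcases Nat.eq_zero_or_pos (2 * n + r) with h | h
  · have hn : n = 0 := by omega
    have hr0 : r = 0 := by omega
    simp [hn, hr0, s2]
  · have h1 : (2 * n + r) % 2 = r := by omega
    have h2 : (2 * n + r) / 2 = n := by omega
    unfold s2
    rw [Nat.digits_def' (by norm_num : 1 < 2) h, List.sum_cons, h1, h2]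

example : True := trivial

lemma lucas2 (n k : ℕ) :
    Nat.choose n k % 2 = (Nat.choose (n % 2) (k % 2) * Nat.choose (n / 2) (k / 2)) % 2 := by
  have := @Choose.choose_modEq_choose_mod_mul_choose_div_nat n k 2 ⟨Nat.prime_two⟩
  exact this

-- choose odd implies s2 monotone
lemma odd_mul_iff {x y : ℕ} (h : (x * y) % 2 = 1) : x % 2 = 1 ∧ y % 2 = 1 := by
  rw [Nat.mul_mod] at h
  rcases Nat.mod_two_eq_zero_or_one x with hx | hx <;>
    rcases Nat.mod_two_eq_zero_or_one y with hy | hy <;> simp [hx, hy] at h ⊢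

lemma bit_le_of_choose_odd {x y : ℕ} (hx : x < 2) (hy : y < 2)
    (h : Nat.choose x y % 2 = 1) : y ≤ x := by
  interval_cases x <;> interval_cases y <;> simp_all

lemma choose_odd_parts {n k : ℕ} (h : Nat.choose n k % 2 = 1) :
    Nat.choose (n % 2) (k % 2) % 2 = 1 ∧ Nat.choose (n / 2) (k / 2) % 2 = 1 := by
  rw [lucas2] at h
  exact odd_mul_iff h

lemma s2_le_of_choose_odd : ∀ n k, Nat.choose n k % 2 = 1 → s2 k ≤ s2 n := by
  intro n
  induction n using Nat.strong_induction_on with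
  | _ n ih =>
    intro k hk
    rcases Nat.eq_zero_or_pos n with rfl | hn
    · rcases Nat.eq_zero_or_pos k with rfl | hkpos
      · exact le_refl _
      · rw [Nat.choose_eq_zero_of_lt hkpos] at hk; simp at hk
    · obtain ⟨h1, h2⟩ := choose_odd_parts hk
      have hle1 : k % 2 ≤ n % 2 :=
        bit_le_of_choose_odd (Nat.mod_lt _ two_pos) (Nat.mod_lt _ two_pos) h1
      have hle2 : s2 (k / 2) ≤ s2 (n / 2) := ih (n / 2) (Nat.div_lt_self hn one_lt_two) _ h2
      have ek : s2 k = k % 2 + s2 (k / 2) := by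
        conv_lhs => rw [← Nat.div_add_mod k 2]
        exact s2_bit _ _ (Nat.mod_lt _ two_pos)
      have en : s2 n = n % 2 + s2 (n / 2) := by
        conv_lhs => rw [← Nat.div_add_mod n 2]
        exact s2_bit _ _ (Nat.mod_lt _ two_pos)
      omega

lemma eq_of_choose_odd_s2 : ∀ n k, Nat.choose n k % 2 = 1 → s2 k = s2 n → k = n := by
  intro n
  induction n using Nat.strong_induction_on with
  | _ n ih =>
    intro k hk hs
    rcases Nat.eq_zero_or_pos n with rfl | hn
    · rcases Nat.eq_zero_or_pos k with rfl | hkpos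
      · rfl
      · rw [Nat.choose_eq_zero_of_lt hkpos] at hk; simp at hk
    · obtain ⟨h1, h2⟩ := choose_odd_parts hk
      have hle1 : k % 2 ≤ n % 2 :=
        bit_le_of_choose_odd (Nat.mod_lt _ two_pos) (Nat.mod_lt _ two_pos) h1
      have hle2 : s2 (k / 2) ≤ s2 (n / 2) := s2_le_of_choose_odd _ _ h2
      have ek : s2 k = k % 2 + s2 (k / 2) := by
        conv_lhs => rw [← Nat.div_add_mod k 2]
        exact s2_bit _ _ (Nat.mod_lt _ two_pos)
      have en : s2 n = n % 2 + s2 (n / 2) := by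
        conv_lhs => rw [← Nat.div_add_mod n 2]
        exact s2_bit _ _ (Nat.mod_lt _ two_pos)
      have e2 : s2 (k / 2) = s2 (n / 2) := by omega
      have := ih (n / 2) (Nat.div_lt_self hn one_lt_two) (k / 2) h2 e2
      omega

def f (a : ℤ) (i j : ℕ) : ℤ := ((Nat.choose j i % 2 : ℕ) : ℤ) * a ^ (s2 j - s2 i)

lemma f_zero (i j : ℕ) : f 0 i j = if i = j then 1 else 0 := by
  unfold f
  split_ifs with h
  · subst h; simp
  · rcases Nat.mod_two_eq_zero_or_one (Nat.choose j i) with hc | hc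
    · simp [hc]
    · have hle : s2 i ≤ s2 j := s2_le_of_choose_odd _ _ hc
      have hne : s2 i ≠ s2 j := fun he => h (eq_of_choose_odd_s2 _ _ hc he)
      rw [zero_pow (by omega : s2 j - s2 i ≠ 0)]
      ring

lemma M1_eq_f (a : ℤ) (i j : ℕ) : M1 a i j = f a i j := by
  by_cases h : a = 0
  · rw [h]; unfold M1; rw [if_pos rfl, f_zero]
  · unfold M1 f; rw [if_neg h]


lemma s2_small {r : ℕ} (hr : r < 2) : s2 r = r := by
  interval_cases r <;> simp [s2]

lemma f_bit (a : ℤ) (i' i0 l' l0 : ℕ) (hi0 : i0 < 2) (hl0 : l0 < 2) :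
    f a (2 * i' + i0) (2 * l' + l0) = f a i' l' * f a i0 l0 := by
  have hmod : (2 * l' + l0) % 2 = l0 := by omega
  have hdiv : (2 * l' + l0) / 2 = l' := by omega
  have hmod' : (2 * i' + i0) % 2 = i0 := by omega
  have hdiv' : (2 * i' + i0) / 2 = i' := by omega
  have hc : Nat.choose (2 * l' + l0) (2 * i' + i0) % 2
      = (Nat.choose l0 i0 % 2) * (Nat.choose l' i' % 2) := by
    rw [lucas2, hmod, hdiv, hmod', hdiv', Nat.mul_mod]
    rcases Nat.mod_two_eq_zero_or_one (Nat.choose l0 i0) with h1 | h1 <;>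
      rcases Nat.mod_two_eq_zero_or_one (Nat.choose l' i') with h2 | h2 <;>
      simp [h1, h2]
  unfold f
  rw [hc]
  rcases Nat.mod_two_eq_zero_or_one (Nat.choose l0 i0) with h1 | h1
  · simp [h1]
  rcases Nat.mod_two_eq_zero_or_one (Nat.choose l' i') with h2 | h2
  · simp [h2]
  have hb : i0 ≤ l0 := bit_le_of_choose_odd hl0 hi0 h1
  have hs : s2 i' ≤ s2 l' := s2_le_of_choose_odd _ _ h2
  have e1 : s2 (2 * l' + l0) = l0 + s2 l' := s2_bit _ _ hl0
  have e2 : s2 (2 * i' + i0) = i0 + s2 i' := s2_bit _ _ hi0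
  have e3 : s2 (2 * l' + l0) - s2 (2 * i' + i0) = (s2 l' - s2 i') + (l0 - i0) := by
    rw [e1, e2]
    have : s2 l0 = l0 := s2_small hl0
    omega
  rw [e3, h1, h2, s2_small hl0, s2_small hi0, pow_add]
  push_cast
  ring

lemma sum_range_two_mul {M : Type*} [AddCommMonoid M] (g : ℕ → M) (n : ℕ) :
    ∑ l ∈ Finset.range (2 * n), g l = ∑ l ∈ Finset.range n, (g (2 * l) + g (2 * l + 1)) := by
  induction n with
  | zero => simp
  | succ n ih =>
    rw [Nat.mul_succ, Finset.sum_range_succ, Finset.sum_range_succ, Finset.sum_range_succ, ← ih]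
    ring_nf
    rw [add_assoc]

lemma f_eq_zero_of_lt {b : ℤ} {l j : ℕ} (h : j < l) : f b l j = 0 := by
  unfold f
  rw [Nat.choose_eq_zero_of_lt h]
  simp

lemma bit_sum (a b : ℤ) (i0 j0 : ℕ) (hi0 : i0 < 2) (hj0 : j0 < 2) :
    f a i0 0 * f b 0 j0 + f a i0 1 * f b 1 j0 = f (a + b) i0 j0 := by
  interval_cases i0 <;> interval_cases j0 <;>
    simp [f, s2, Nat.choose] <;> ring

lemma f_to_zero (c : ℤ) (i : ℕ) : f c i 0 = ((Nat.choose 0 i % 2 : ℕ) : ℤ) := by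
  unfold f
  have : s2 0 = 0 := by simp [s2]
  rw [this, Nat.zero_sub, pow_zero, mul_one]

lemma f_mul (a b : ℤ) : ∀ j i, ∑ l ∈ Finset.range (j + 1), f a i l * f b l j = f (a + b) i j := by
  intro j
  induction j using Nat.strong_induction_on with
  | _ j ih =>
    intro i
    rcases Nat.eq_zero_or_pos j with rfl | hj
    · rw [Finset.sum_range_one, f_to_zero a, f_to_zero (a + b)]
      have hb : f b 0 0 = 1 := by unfold f; simp
      rw [hb, mul_one]
    · have hieq : i = 2 * (i / 2) + i % 2 := by omega
      have hjeq : j = 2 * (j / 2) + j % 2 := by omega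
      set j' := j / 2 with hj'
      set j0 := j % 2 with hj0
      set i' := i / 2 with hi'
      set i0 := i % 2 with hi0'
      have hi0 : i0 < 2 := Nat.mod_lt _ two_pos
      have hj0lt : j0 < 2 := Nat.mod_lt _ two_pos
      have hext : ∑ l ∈ Finset.range (j + 1), f a i l * f b l j
          = ∑ l ∈ Finset.range (2 * (j' + 1)), f a i l * f b l j := by
        apply Finset.sum_subset (Finset.range_subset_range.mpr (by omega))
        intro x _ hx
        simp only [Finset.mem_range, not_lt] at hx
        rw [show f b x j = 0 from f_eq_zero_of_lt (by omega), mul_zero]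
      rw [hext, sum_range_two_mul, hieq, hjeq]
      have key : ∀ l', f a (2 * i' + i0) (2 * l') * f b (2 * l') (2 * j' + j0)
            + f a (2 * i' + i0) (2 * l' + 1) * f b (2 * l' + 1) (2 * j' + j0)
          = (f a i' l' * f b l' j') * f (a + b) i0 j0 := by
        intro l'
        have h1 := f_bit a i' i0 l' 0 hi0 (by norm_num)
        have h2 := f_bit b l' 0 j' j0 (by norm_num) hj0lt
        rw [add_zero] at h1 h2
        rw [h1, h2, f_bit a i' i0 l' 1 hi0 (by norm_num),
          f_bit b l' 1 j' j0 (by norm_num) hj0lt, ← bit_sum a b i0 j0 hi0 hj0lt]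
        ring
      rw [Finset.sum_congr rfl (fun l' _ => key l'), ← Finset.sum_mul,
        ih j' (by omega) i', f_bit (a + b) i' i0 j' j0 hi0 hj0lt]

/-- M₁(a)·M₁(b) = M₁(a+b): only indices `i ≤ l ≤ j` contribute to the sum. -/
theorem M1_mul (a b : ℤ) (i j : ℕ) :
    ∑ l ∈ Finset.range (j + 1), M1 a i l * M1 b l j = M1 (a + b) i j := by
  simp only [M1_eq_f]
  exact f_mul a b j i
end

section
/- Let M₂⁽ⁿ⁾ be the n×n integer matrix with entries (C(i+j,i) mod 2) for 0 ≤ i,j < n. Then det(M₂⁽ⁿ⁾) = ∏_{k=0}^{n−1} (−1)^{s₂(k)}. -/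
open Finset Finset.Nat

namespace Nat

theorem mem_equivBitIndices {m t : ℕ} : t ∈ equivBitIndices m ↔ m.testBit t := by
  simp [equivBitIndices_apply]

theorem le_of_equivBitIndices_subset {k m : ℕ} (h : equivBitIndices k ⊆ equivBitIndices m) :
    k ≤ m :=
  orderIsoColex.le_iff_le.mp (Colex.toColex_le_toColex_of_subset h)

theorem equivBitIndices_subset_iff {k m : ℕ} :
    equivBitIndices k ⊆ equivBitIndices m ↔
      (k % 2 = 1 → m % 2 = 1) ∧ equivBitIndices (k / 2) ⊆ equivBitIndices (m / 2) := by
  simp only [subset_iff, mem_equivBitIndices, testBit_div_two]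
  constructor
  · intro h
    exact ⟨by simpa using @h 0, fun t ht => h ht⟩
  · rintro ⟨h0, h⟩ (_ | t) ht
    · simpa using h0 (by simpa using ht)
    · exact h ht

theorem choose_mod_two (m k : ℕ) :
    m.choose k % 2 = if equivBitIndices k ⊆ equivBitIndices m then 1 else 0 := by
  induction m using Nat.strong_induction_on generalizing k with
  | _ m ih =>
  rcases m.eq_zero_or_pos with rfl | hm
  · rcases k.eq_zero_or_pos with rfl | hk
    · simp
    · rw [choose_eq_zero_of_lt hk,
        if_neg fun h => by simpa [hk.ne'] using le_of_equivBitIndices_subset h]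
  rw [Choose.choose_modEq_choose_mod_mul_choose_div_nat (p := 2), Nat.mul_mod,
    ih (m / 2) (by omega)]
  simp only [equivBitIndices_subset_iff (k := k)]
  by_cases hs : equivBitIndices (k / 2) ⊆ equivBitIndices (m / 2) <;>
    rcases Nat.mod_two_eq_zero_or_one m with hm | hm <;>
    rcases Nat.mod_two_eq_zero_or_one k with hk | hk <;> simp [-equivBitIndices_apply, hs, hm, hk]

theorem choose_mod_two_mul_choose_mod_two (i j k : ℕ) :
    i.choose k % 2 * (j.choose k % 2) =
      if equivBitIndices k ⊆ equivBitIndices i ∩ equivBitIndices j then 1 else 0 := by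
  simp only [choose_mod_two, subset_inter_iff, ite_zero_mul_ite_zero, mul_one]

theorem sum_range_filter_equivBitIndices_subset {M : Type*} [AddCommMonoid M]
    (g : Finset ℕ → M) {S : Finset ℕ} {m n : ℕ} (hS : S ⊆ equivBitIndices m) (hmn : m < n) :
    ∑ k ∈ range n with equivBitIndices k ⊆ S, g (equivBitIndices k) = ∑ t ∈ S.powerset, g t := by
  refine sum_equiv equivBitIndices (fun k => ?_) (fun _ _ => rfl)
  simp only [mem_filter, mem_range, mem_powerset]
  exact ⟨And.right, fun h => ⟨(le_of_equivBitIndices_subset (h.trans hS)).trans_lt hmn, h⟩⟩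

theorem sum_range_choose_mul_choose (i j : ℕ) :
    ∑ k ∈ range (i + 1), i.choose k * j.choose k = (i + j).choose i := by
  rw [add_choose_eq, ← Nat.sum_antidiagonal_swap, Nat.sum_antidiagonal_eq_sum_range_succ_mk]
  refine sum_congr rfl fun k hk => ?_
  rw [Prod.swap_prod_mk, choose_symm (by simpa [Nat.lt_succ_iff] using hk)]

theorem choose_add_mod_two (i j : ℕ) :
    (i + j).choose i % 2 = if Disjoint (equivBitIndices i) (equivBitIndices j) then 1 else 0 := by
  calc (i + j).choose i % 2
      = (∑ k ∈ range (i + 1), i.choose k % 2 * (j.choose k % 2)) % 2 := by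
        rw [← sum_range_choose_mul_choose, sum_nat_mod,
          sum_nat_mod _ _ fun k => i.choose k % 2 * (j.choose k % 2)]
        exact congrArg (· % 2) (sum_congr rfl fun k _ => Nat.mul_mod ..)
    _ = 2 ^ #(equivBitIndices i ∩ equivBitIndices j) % 2 := by
        simp_rw [choose_mod_two_mul_choose_mod_two, ← sum_filter]
        rw [sum_range_filter_equivBitIndices_subset (fun _ => 1) inter_subset_left i.lt_succ_self,
          sum_const, card_powerset, smul_eq_mul, mul_one]
    _ = _ := by
        simp only [disjoint_iff_inter_eq_empty]
        split_ifs with h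
        · rw [Nat.two_pow_mod_two_eq_one, h, card_empty]
        · rw [Nat.two_pow_mod_two_eq_zero, Finset.card_pos, nonempty_iff_ne_empty]
          exact h

end Nat

theorem s2_eq_card_equivBitIndices (k : ℕ) : s2 k = #(equivBitIndices k) := by
  rw [equivBitIndices_apply, List.toFinset_card_of_nodup Nat.bitIndices_nodup]
  induction k using Nat.strong_induction_on with
  | _ k ih =>
  rcases k.eq_zero_or_pos with rfl | hk
  · simp [s2]
  rw [s2, Nat.digits_def' one_lt_two hk, List.sum_cons, ← s2, ih (k / 2) (by omega)]
  obtain ⟨a, rfl | rfl⟩ := k.even_or_odd'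
  · simp
  · rw [show (2 * a + 1) / 2 = a by omega, Nat.bitIndices_two_mul_add_one]
    simp [add_comm]

theorem sum_range_neg_one_pow_s2 {i j n : ℕ} (hi : i < n) :
    ∑ k ∈ range n,
        (if equivBitIndices k ⊆ equivBitIndices i ∩ equivBitIndices j then (-1 : ℤ) ^ s2 k else 0) =
      if Disjoint (equivBitIndices i) (equivBitIndices j) then 1 else 0 := by
  simp_rw [← sum_filter, s2_eq_card_equivBitIndices]
  rw [Nat.sum_range_filter_equivBitIndices_subset (fun t => (-1 : ℤ) ^ #t) inter_subset_left hi,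
    sum_powerset_neg_one_pow_card]
  simp only [disjoint_iff_inter_eq_empty]

namespace Matrix

def pascalModTwo (n : ℕ) : Matrix (Fin n) (Fin n) ℤ :=
  of fun i k => ((Nat.choose i k % 2 : ℕ) : ℤ)

theorem det_pascalModTwo (n : ℕ) : (pascalModTwo n).det = 1 := by
  rw [det_of_isLowerTriangular _ fun i k (h : i < k) => by
    simp [pascalModTwo, Nat.choose_eq_zero_of_lt (Fin.lt_def.mp h)]]
  simp [pascalModTwo]

theorem pascalModTwo_mul_diagonal_mul_transpose (n : ℕ) :
    pascalModTwo n * diagonal (fun k : Fin n => (-1) ^ s2 k) * (pascalModTwo n)ᵀ =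
      of fun i j : Fin n => ((Nat.choose (i + j) i % 2 : ℕ) : ℤ) := by
  ext i j
  have hterm : ∀ k : Fin n, pascalModTwo n i k * (-1) ^ s2 k * pascalModTwo n j k =
      if equivBitIndices k ⊆ equivBitIndices i ∩ equivBitIndices j
      then (-1) ^ s2 k else 0 := fun k => by
    rw [pascalModTwo, of_apply, of_apply, mul_right_comm, ← Nat.cast_mul,
      Nat.choose_mod_two_mul_choose_mod_two]
    split_ifs <;> simp
  rw [mul_apply]
  simp only [mul_diagonal, transpose_apply, hterm]
  rw [Fin.sum_univ_eq_sum_range (fun k => if equivBitIndices k ⊆ _ then (-1 : ℤ) ^ s2 k else 0),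
    sum_range_neg_one_pow_s2 i.isLt, of_apply, Nat.choose_add_mod_two]
  split_ifs <;> simp

end Matrix

theorem det_M2_mod_two (n : ℕ) :
    Matrix.det (fun i j : Fin n => ((Nat.choose ((i : ℕ) + j) i % 2 : ℕ) : ℤ))
      = ∏ k ∈ Finset.range n, (-1 : ℤ) ^ (s2 k) := by
  rw [← Fin.prod_univ_eq_prod_range (fun k => (-1 : ℤ) ^ s2 k), ← Matrix.det_diagonal]
  have h := congrArg Matrix.det (Matrix.pascalModTwo_mul_diagonal_mul_transpose n)
  rw [Matrix.det_mul, Matrix.det_mul, Matrix.det_transpose, Matrix.det_pascalModTwo, one_mul,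
    mul_one] at h
  exact h.symm
end

section
/- Define the integer sequence (c_k)_{k≥0} by c_{2k} = (−1)^k C_k (where C_k is the k-th Catalan number) and c_{2k+1} = 0. Then for every n ≥ 1 and every prime p, the determinant of the n×n Hankel matrix with entries c_{i+j} (0 ≤ i,j < n) is not divisible by p; consequently this determinant equals ±1. -/
/-!
Weight every down step of a lattice path by `-1`. Then `cseq m` is the weighted number of paths
of `m` steps `±1` from height `0` back to `0` that never go below `0`. Cutting such a path of
length `i + j` after `i` steps gives `H = L D Lᵀ`, where `L i k` is the weighted number of such
paths of length `i` ending at height `k`, a lower unitriangular matrix, and `D = diag((-1)^k)`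
accounts for the `k` surplus down steps of the second half. Hence `det H = (-1)^(n(n-1)/2)`.
-/

/-- c_{2k} = (-1)^k C_k (Catalan), c_{2k+1} = 0. -/
def cseq (k : ℕ) : ℤ :=
  if k % 2 = 0 then (-1) ^ (k / 2) * (catalan (k / 2) : ℤ) else 0

open Finset Matrix

/-- `ballot w i k` counts lattice paths of `i` steps `±1` from height `0` to height `k` that never
go below `0`, each path weighted by `w ^ (number of down steps)`. -/
def ballot {R : Type*} [CommRing R] (w : R) : ℕ → ℕ → R
  | 0, 0 => 1
  | 0, _ + 1 => 0
  | i + 1, 0 => w * ballot w i 1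
  | i + 1, k + 1 => ballot w i k + w * ballot w i (k + 2)

theorem catalan_add_choose_succ_eq_centralBinom (m : ℕ) :
    catalan m + (2 * m).choose (m + 1) = m.centralBinom := by
  refine Nat.eq_of_mul_eq_mul_left (by omega : 0 < m + 1) ?_
  have hsucc : (2 * m).choose (m + 1) * (m + 1) = m.centralBinom * m := by
    rw [Nat.choose_succ_right_eq, Nat.centralBinom_eq_two_mul_choose]
    congr 1
    omega
  rw [mul_add, succ_mul_catalan_eq_centralBinom, mul_comm, hsucc]
  ring

section ballot

variable {R : Type*} [CommRing R] (w : R)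

theorem ballot_eq_zero_of_lt {i k : ℕ} (h : i < k) : ballot w i k = 0 := by
  induction i generalizing k with
  | zero => obtain ⟨k, rfl⟩ := Nat.exists_eq_succ_of_ne_zero h.ne'; rfl
  | succ i ih =>
    obtain ⟨k, rfl⟩ := Nat.exists_eq_succ_of_ne_zero (by omega : k ≠ 0)
    rw [ballot, ih (by omega), ih (by omega), mul_zero, add_zero]

theorem ballot_self (i : ℕ) : ballot w i i = 1 := by
  induction i with
  | zero => rfl
  | succ i ih => rw [ballot, ih, ballot_eq_zero_of_lt w (by omega), mul_zero, add_zero]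

theorem ballot_eq_zero_of_odd {i k : ℕ} (h : Odd (i + k)) : ballot w i k = 0 := by
  rw [Nat.odd_iff] at h
  induction i generalizing k with
  | zero => cases k with
    | zero => simp at h
    | succ k => rfl
  | succ i ih => cases k with
    | zero => rw [ballot, ih (by omega), mul_zero]
    | succ k => rw [ballot, ih (by omega), ih (by omega), mul_zero, add_zero]

theorem ballot_eq_of_even {i k : ℕ} (h : Even (i + k)) :
    ballot w i k =
      w ^ ((i - k) / 2) * ((i.choose ((i + k) / 2) : R) - i.choose ((i + k) / 2 + 1)) := by
  rw [Nat.even_iff] at h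
  induction i generalizing k with
  | zero => cases k with
    | zero => simp [ballot]
    | succ k => simp [ballot, Nat.choose_eq_zero_of_lt (by omega : 0 < (k + 1) / 2)]
  | succ i ih => cases k with
    | zero =>
      obtain ⟨m, rfl⟩ : ∃ m, i = 2 * m + 1 := ⟨i / 2, by omega⟩
      rw [ballot, ih (by omega)]
      have hsymm : (2 * m + 1).choose m = (2 * m + 1).choose (m + 1) := by
        rw [← Nat.choose_symm (by omega)]
        congr 1
        omega
      simp only [show (2 * m + 1 - 1) / 2 = m by omega, show (2 * m + 1 + 1) / 2 = m + 1 by omega,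
        show (2 * m + 1 + 1 - 0) / 2 = m + 1 by omega,
        Nat.choose_succ_succ' (2 * m + 1), hsymm]
      push_cast
      ring
    | succ k =>
      rw [ballot, ih (by omega), ih (by omega)]
      set s := (i + k) / 2
      simp only [show (i + 1 + (k + 1)) / 2 = s + 1 by omega,
        show (i + (k + 2)) / 2 = s + 1 by omega, show i + 1 - (k + 1) = i - k by omega,
        Nat.choose_succ_succ']
      by_cases hki : k + 2 ≤ i
      · rw [show (i - k) / 2 = (i - (k + 2)) / 2 + 1 by omega]
        push_cast
        ring
      · -- by parity `i ≤ k`, so the binomials of index `s + 1 ≥ i + 1` vanish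
        simp only [Nat.choose_eq_zero_of_lt (by omega : i < s + 1),
          Nat.choose_eq_zero_of_lt (by omega : i < s + 1 + 1)]
        push_cast
        ring

theorem ballot_two_mul_zero (m : ℕ) : ballot w (2 * m) 0 = w ^ m * catalan m := by
  rw [ballot_eq_of_even w (by simp), show (2 * m - 0) / 2 = m by omega,
    show (2 * m + 0) / 2 = m by omega, ← Nat.centralBinom_eq_two_mul_choose,
    ← catalan_add_choose_succ_eq_centralBinom]
  push_cast
  ring

theorem sum_ballot_succ_mul_ballot {i j N : ℕ} (hi : i < N) (hj : j < N) :
    ∑ k ∈ range N, ballot w (i + 1) k * w ^ k * ballot w j k =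
      ∑ k ∈ range N, ballot w i k * w ^ k * ballot w (j + 1) k := by
  obtain ⟨M, rfl⟩ : ∃ M, N = M + 1 := ⟨N - 1, by omega⟩
  have h1 : ∑ k ∈ range M, ballot w i k * w ^ (k + 1) * ballot w j (k + 1) =
      ∑ k ∈ range M, ballot w i (k + 1) * w ^ (k + 2) * ballot w j (k + 2) +
        ballot w i 0 * w * ballot w j 1 := by
    have := sum_range_succ' (fun k => ballot w i k * w ^ (k + 1) * ballot w j (k + 1)) M
    rw [sum_range_succ, ballot_eq_zero_of_lt w (by omega : j < M + 1)] at this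
    simpa using this
  have h2 : ∑ k ∈ range M, ballot w i (k + 1) * w ^ (k + 1) * ballot w j k =
      ∑ k ∈ range M, ballot w i (k + 2) * w ^ (k + 2) * ballot w j (k + 1) +
        ballot w i 1 * w * ballot w j 0 := by
    have := sum_range_succ' (fun k => ballot w i (k + 1) * w ^ (k + 1) * ballot w j k) M
    rw [sum_range_succ, ballot_eq_zero_of_lt w (by omega : i < M + 1)] at this
    simpa using this
  -- After unfolding one step, the up steps on each side match the down steps on the other, up to
  -- a shift of `k` and boundary terms at height `M + 1`, where both `ballot`s vanish.
  rw [sum_range_succ', sum_range_succ']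
  simp only [ballot, add_mul, mul_add, sum_add_distrib]
  ring_nf
  ring_nf at h1 h2
  linear_combination h1 - h2

theorem sum_ballot_mul_ballot_of_add_lt {i j N : ℕ} (h : i + j < N) :
    ∑ k ∈ range N, ballot w i k * w ^ k * ballot w j k = ballot w (i + j) 0 := by
  induction i generalizing j with
  | zero =>
    rw [sum_eq_single_of_mem 0 (by simp; omega) fun k _ hk => by
      rw [ballot_eq_zero_of_lt w (Nat.pos_of_ne_zero hk), zero_mul, zero_mul]]
    simp [ballot]
  | succ i ih =>
    rw [sum_ballot_succ_mul_ballot w (by omega) (by omega), ih (by omega), Nat.succ_add_eq_add_succ]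

theorem sum_ballot_mul_ballot_range_of_le {i j N N' : ℕ} (hi : i < N) (hN : N ≤ N') :
    ∑ k ∈ range N', ballot w i k * w ^ k * ballot w j k =
      ∑ k ∈ range N, ballot w i k * w ^ k * ballot w j k :=
  (sum_subset (range_subset_range.mpr hN) fun k _ hk => by
    rw [ballot_eq_zero_of_lt w (by simp at hk; omega), zero_mul, zero_mul]).symm

theorem sum_ballot_mul_ballot {i j N : ℕ} (hi : i < N) (hj : j < N) :
    ∑ k ∈ range N, ballot w i k * w ^ k * ballot w j k = ballot w (i + j) 0 := by
  rw [← sum_ballot_mul_ballot_range_of_le w hi (Nat.le_add_right N (i + j)),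
    sum_ballot_mul_ballot_of_add_lt w (by omega)]

theorem det_hankel_ballot (n : ℕ) :
    det (of fun i j : Fin n => ballot w (i + j) 0) = w ^ (n * (n - 1) / 2) := by
  let L : Matrix (Fin n) (Fin n) R := of fun i k => ballot w i k
  have hfactor : of (fun i j : Fin n => ballot w (i + j) 0) =
      L * diagonal (fun k : Fin n => w ^ (k : ℕ)) * Lᵀ := by
    ext i j
    rw [mul_apply, of_apply, ← sum_ballot_mul_ballot w i.isLt j.isLt,
      ← Fin.sum_univ_eq_sum_range (fun k => ballot w i k * w ^ k * ballot w j k)]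
    simp [L, mul_diagonal]
  have hL : L.det = 1 := by
    rw [det_of_isLowerTriangular L fun i k (hik : i < k) => ballot_eq_zero_of_lt w hik]
    simp [L, ballot_self]
  rw [hfactor, det_mul, det_mul, det_transpose, hL, det_diagonal, prod_pow_eq_pow_sum,
    Fin.sum_univ_eq_sum_range (fun k => k), sum_range_id, one_mul, mul_one]

end ballot

theorem cseq_eq_ballot (m : ℕ) : cseq m = ballot (-1) m 0 := by
  obtain ⟨k, rfl | rfl⟩ := Nat.even_or_odd' m
  · simp [cseq, ballot_two_mul_zero]
  · rw [ballot_eq_zero_of_odd _ (by simp)]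
    simp [cseq]

theorem det_catalan_hankel_general (n : ℕ) :
    (∀ p : ℕ, p.Prime →
        ¬ ((p : ℤ) ∣ Matrix.det (fun i j : Fin n => cseq ((i : ℕ) + (j : ℕ))))) ∧
      (Matrix.det (fun i j : Fin n => cseq ((i : ℕ) + (j : ℕ))) = 1 ∨
        Matrix.det (fun i j : Fin n => cseq ((i : ℕ) + (j : ℕ))) = -1) := by
  have hdet : Matrix.det (fun i j : Fin n => cseq ((i : ℕ) + (j : ℕ))) =
      (-1) ^ (n * (n - 1) / 2) := by
    simp_rw [cseq_eq_ballot]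
    exact det_hankel_ballot (-1) n
  have hunit : IsUnit (Matrix.det (fun i j : Fin n => cseq ((i : ℕ) + (j : ℕ)))) :=
    hdet ▸ isUnit_neg_one.pow _
  exact ⟨fun p hp hdvd =>
    (Nat.prime_iff_prime_int.mp hp).not_isUnit (isUnit_of_dvd_unit hdvd hunit),
    hdet ▸ neg_one_pow_eq_or ℤ _⟩

theorem det_catalan_hankel (n : ℕ) (hn : 1 ≤ n) :
    (∀ p : ℕ, p.Prime →
        ¬ ((p : ℤ) ∣ Matrix.det (fun i j : Fin n => cseq ((i : ℕ) + (j : ℕ))))) ∧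
      (Matrix.det (fun i j : Fin n => cseq ((i : ℕ) + (j : ℕ))) = 1 ∨
        Matrix.det (fun i j : Fin n => cseq ((i : ℕ) + (j : ℕ))) = -1) :=
  det_catalan_hankel_general n
end

section
/- Define h_{i,j} ∈ {0,1} ⊂ ℤ by h_{i,j} = 1 if i+j = 2^k − 2 for some positive integer k, and h_{i,j} = 0 otherwise. Then for every n ≥ 1 the determinant of the n×n matrix (h_{i,j})_{0≤i,j<n} equals ±1. -/
/-!
The entry `hEnt i j` is nonzero exactly when `i + j + 2` is a power of two. For
`2 ^ K ≤ n < 2 ^ (K + 1)` and `m = 2 ^ (K + 1) - n - 1`, any permutation `σ` of `[0, n)` with all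
`hEnt (σ i) i ≠ 0` must send each `i ≥ m` to its reflection `2 ^ (K + 1) - 2 - i`, and hence
restricts to such a permutation of `[0, m)`. By induction there is exactly one such `σ`, so the
Leibniz expansion of the determinant has a single nonzero term, namely `sign σ`.
-/

open scoped Classical in
/-- h_{i,j} = 1 if i+j = 2^k - 2 for some k ≥ 1, else 0. -/
noncomputable def hEnt (i j : ℕ) : ℤ :=
  if ∃ k : ℕ, 1 ≤ k ∧ i + j = 2 ^ k - 2 then 1 else 0

open Set Equiv

theorem Matrix.det_eq_sign_of_unique_perm {R ι : Type*} [CommRing R] [Fintype ι] [DecidableEq ι]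
    (M : Matrix ι ι R) (σ : Perm ι) (hσ : ∀ i, M (σ i) i = 1)
    (huniq : ∀ τ : Perm ι, (∀ i, M (τ i) i ≠ 0) → τ = σ) :
    M.det = Perm.sign σ := by
  rw [Matrix.det_apply, Finset.sum_eq_single σ]
  · simp [hσ, Units.smul_def]
  · intro τ _ hτσ
    obtain ⟨i, hi⟩ : ∃ i, M (τ i) i = 0 := by
      by_contra! h
      exact hτσ (huniq τ h)
    exact smul_eq_zero_of_right _ (Finset.prod_eq_zero (Finset.mem_univ i) hi)
  · simp

theorem Nat.eq_two_pow_succ_of_isPowerOfTwo {s K : ℕ} (hs : s.isPowerOfTwo) (hlo : 2 ^ K < s)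
    (hhi : s < 2 ^ (K + 2)) : s = 2 ^ (K + 1) := by
  obtain ⟨k, rfl⟩ := hs
  rw [Nat.pow_lt_pow_iff_right one_lt_two] at hlo hhi
  rw [show k = K + 1 by omega]

/-- A choice of one nonzero entry `hEnt (f i) i` in every row and every column of `[0, n)`. -/
structure IsPowTwoMatching (n : ℕ) (f : ℕ → ℕ) : Prop where
  bijOn : BijOn f (Iio n) (Iio n)
  isPowerOfTwo : ∀ i < n, (i + f i + 2).isPowerOfTwo

namespace IsPowTwoMatching

variable {n K : ℕ} {f g : ℕ → ℕ}

theorem add_apply_add_two_eq (hf : IsPowTwoMatching n f) (hnK : n < 2 ^ (K + 1)) {i : ℕ}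
    (hi : i < n) (hlo : 2 ^ K < i + f i + 2) : i + f i + 2 = 2 ^ (K + 1) := by
  have hfi : f i < n := hf.bijOn.mapsTo hi
  have : 2 ^ (K + 2) = 2 * 2 ^ (K + 1) := by ring
  exact Nat.eq_two_pow_succ_of_isPowerOfTwo (hf.isPowerOfTwo i hi) hlo (by omega)

/-- Either `i` or its reflection `2 ^ (K + 1) - 2 - i` is large enough that its partner sum
exceeds `2 ^ K`, hence equals `2 ^ (K + 1)`. -/
theorem apply_eq_of_le (hf : IsPowTwoMatching n f) (hnK : n < 2 ^ (K + 1))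
    {i : ℕ} (hi : i < n) (hmi : 2 ^ (K + 1) ≤ n + 1 + i) : f i = 2 ^ (K + 1) - 2 - i := by
  have hK : 2 ^ (K + 1) = 2 * 2 ^ K := by ring
  by_cases hbig : 2 ^ K < i + 2
  · have := hf.add_apply_add_two_eq hnK hi (by omega)
    omega
  · obtain ⟨j, hj, hji⟩ := hf.bijOn.surjOn (show 2 ^ (K + 1) - 2 - i ∈ Iio n by simp; omega)
    have hj' : j < n := hj
    have := hf.add_apply_add_two_eq hnK hj' (by rw [hji]; omega)
    obtain rfl : j = i := by omega
    exact hji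

theorem restrict (hf : IsPowTwoMatching n f) (hKn : 2 ^ K ≤ n) (hnK : n < 2 ^ (K + 1)) :
    IsPowTwoMatching (2 ^ (K + 1) - (n + 1)) f := by
  have hK : 2 ^ (K + 1) = 2 * 2 ^ K := by ring
  have hsub : Iio (2 ^ (K + 1) - (n + 1)) ⊆ Iio n := Iio_subset_Iio (by omega)
  have hmaps : MapsTo f (Iio (2 ^ (K + 1) - (n + 1))) (Iio (2 ^ (K + 1) - (n + 1))) := by
    intro i (hi : i < _)
    by_contra hfi
    simp only [mem_Iio, not_lt] at hfi
    have hfin : f i < n := hf.bijOn.mapsTo (hsub hi)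
    have hj : 2 ^ (K + 1) - 2 - f i < n := by omega
    have hfj := hf.apply_eq_of_le hnK hj (by omega)
    have := hf.bijOn.injOn (mem_Iio.2 hj) (hsub hi) (by rw [hfj]; omega)
    omega
  exact ⟨(finite_Iio _).injOn_iff_bijOn_of_mapsTo hmaps |>.1 (hf.bijOn.injOn.mono hsub),
    fun i hi => hf.isPowerOfTwo i (by omega)⟩

theorem eqOn (hf : IsPowTwoMatching n f) (hg : IsPowTwoMatching n g) : EqOn f g (Iio n) := by
  induction n using Nat.strong_induction_on with
  | _ n ih =>
    intro i (hi : i < n)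
    have hKn : 2 ^ Nat.log 2 n ≤ n := Nat.pow_log_le_self 2 (by omega)
    have hnK : n < 2 ^ (Nat.log 2 n + 1) := Nat.lt_pow_succ_log_self one_lt_two n
    by_cases hmi : 2 ^ (Nat.log 2 n + 1) ≤ n + 1 + i
    · rw [hf.apply_eq_of_le hnK hi hmi, hg.apply_eq_of_le hnK hi hmi]
    · exact ih _ (by omega) (hf.restrict hKn hnK) (hg.restrict hKn hnK) (mem_Iio.2 (by omega))

noncomputable def toPerm (hf : IsPowTwoMatching n f) : Perm (Fin n) :=
  .ofBijective (fun i => ⟨f i, hf.bijOn.mapsTo i.2⟩) <| Finite.injective_iff_bijective.1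
    fun i j hij => Fin.ext <| hf.bijOn.injOn i.2 j.2 (congrArg Fin.val hij)

@[simp]
theorem toPerm_apply (hf : IsPowTwoMatching n f) (i : Fin n) : (hf.toPerm i : ℕ) = f i := rfl

end IsPowTwoMatching

theorem Equiv.Perm.extendDomain_finEquivSubtype_apply {n : ℕ} (σ : Perm (Fin n)) (i : Fin n) :
    σ.extendDomain Fin.equivSubtype i = σ i :=
  σ.extendDomain_apply_image Fin.equivSubtype i

theorem Equiv.Perm.isPowTwoMatching_extendDomain {n : ℕ} (σ : Perm (Fin n))
    (hσ : ∀ i : Fin n, ((i : ℕ) + (σ i : ℕ) + 2).isPowerOfTwo) :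
    IsPowTwoMatching n (σ.extendDomain Fin.equivSubtype) := by
  have happly : ∀ i (hi : i < n), σ.extendDomain Fin.equivSubtype i = σ ⟨i, hi⟩ :=
    fun i hi => σ.extendDomain_finEquivSubtype_apply ⟨i, hi⟩
  have hmaps : MapsTo (σ.extendDomain Fin.equivSubtype) (Iio n) (Iio n) := fun i hi => by
    rw [mem_Iio, happly i hi]; exact Fin.is_lt _
  refine ⟨(finite_Iio n).injOn_iff_bijOn_of_mapsTo hmaps |>.1 (Equiv.injective _).injOn,
    fun i hi => ?_⟩
  rw [happly i hi]
  exact hσ ⟨i, hi⟩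

theorem exists_isPowTwoMatching (n : ℕ) :
    ∃ f, IsPowTwoMatching n f ∧ InvOn f f (Iio n) (Iio n) := by
  induction n using Nat.strong_induction_on with
  | _ n ih =>
    rcases n.eq_zero_or_pos with rfl | hn
    · exact ⟨id, ⟨bijOn_id _, by simp⟩, by simp [InvOn, LeftInvOn, RightInvOn]⟩
    set K := Nat.log 2 n
    have hKn : 2 ^ K ≤ n := Nat.pow_log_le_self 2 hn.ne'
    have hnK : n < 2 ^ (K + 1) := Nat.lt_pow_succ_log_self one_lt_two n
    have hK : 2 ^ (K + 1) = 2 * 2 ^ K := by ring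
    set m := 2 ^ (K + 1) - (n + 1)
    obtain ⟨f₀, hf₀, hinv₀⟩ := ih m (by omega)
    have hf₀m : ∀ i < m, f₀ i < m := fun i hi => hf₀.bijOn.mapsTo hi
    let f i := if m ≤ i then 2 ^ (K + 1) - 2 - i else f₀ i
    have hmaps : MapsTo f (Iio n) (Iio n) := by
      intro i (hi : i < n)
      by_cases h : m ≤ i
      · simp only [f, if_pos h, mem_Iio]; omega
      · simp only [f, if_neg h, mem_Iio]; have := hf₀m i (by omega); omega
    have hinv : LeftInvOn f f (Iio n) := by
      intro i (hi : i < n)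
      by_cases h : m ≤ i
      · simp only [f, if_pos h, if_pos (show m ≤ 2 ^ (K + 1) - 2 - i by omega)]; omega
      · have := hf₀m i (by omega)
        simp only [f, if_neg h, if_neg (show ¬m ≤ f₀ i by omega)]
        exact hinv₀.1 (show i < m by omega)
    refine ⟨f, ⟨InvOn.bijOn ⟨hinv, hinv⟩ hmaps hmaps, fun i hi => ?_⟩, hinv, hinv⟩
    by_cases h : m ≤ i
    · simp only [f, if_pos h]; exact ⟨K + 1, by omega⟩
    · simp only [f, if_neg h]; exact hf₀.isPowerOfTwo i (by omega)

theorem hEnt_ne_zero_iff {i j : ℕ} : hEnt i j ≠ 0 ↔ (i + j + 2).isPowerOfTwo := by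
  have hpow : (∃ k, 1 ≤ k ∧ i + j = 2 ^ k - 2) ↔ (i + j + 2).isPowerOfTwo := by
    constructor
    · rintro ⟨k, hk, hij⟩
      have : 2 ≤ 2 ^ k := Nat.le_self_pow (by omega) 2
      exact ⟨k, by omega⟩
    · rintro ⟨k, hk⟩
      refine ⟨k, Nat.pos_of_ne_zero ?_, by omega⟩
      rintro rfl
      simp at hk
  unfold hEnt
  split_ifs with h <;> simp [← hpow, h]

theorem hEnt_eq_one_of_ne_zero {i j : ℕ} (h : hEnt i j ≠ 0) : hEnt i j = 1 := by
  unfold hEnt at *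
  split_ifs at * <;> simp_all

theorem det_catalan_mod_two_hankel_general (n : ℕ) :
    Matrix.det (fun i j : Fin n => hEnt (i : ℕ) (j : ℕ)) = 1 ∨
      Matrix.det (fun i j : Fin n => hEnt (i : ℕ) (j : ℕ)) = -1 := by
  obtain ⟨f, hf, -⟩ := exists_isPowTwoMatching n
  have hentry (i j : Fin n) : hEnt i j ≠ 0 ↔ ((j : ℕ) + i + 2).isPowerOfTwo := by
    rw [hEnt_ne_zero_iff, add_comm (i : ℕ)]
  have hdet : Matrix.det (fun i j : Fin n => hEnt (i : ℕ) (j : ℕ)) = Perm.sign hf.toPerm := by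
    refine Matrix.det_eq_sign_of_unique_perm _ _
      (fun i => hEnt_eq_one_of_ne_zero ((hentry _ _).2 (hf.isPowerOfTwo i i.2))) fun τ hτ => ?_
    have hτf := (τ.isPowTwoMatching_extendDomain fun i => (hentry _ _).1 (hτ i)).eqOn hf
    ext i
    rw [hf.toPerm_apply, ← hτf i.2, τ.extendDomain_finEquivSubtype_apply]
  rcases Int.units_eq_one_or (Perm.sign hf.toPerm) with h | h <;> simp [hdet, h]

theorem det_catalan_mod_two_hankel (n : ℕ) (hn : 1 ≤ n) :
    Matrix.det (fun i j : Fin n => hEnt (i : ℕ) (j : ℕ)) = 1 ∨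
      Matrix.det (fun i j : Fin n => hEnt (i : ℕ) (j : ℕ)) = -1 :=
  det_catalan_mod_two_hankel_general n
end

section
/- The Catalan number C_k is odd if and only if k = 2^m − 1 for some nonnegative integer m. -/
open Finset

lemma catalan_succ_range (n : ℕ) :
    catalan (n + 1) = ∑ i ∈ range (n + 1), catalan i * catalan (n - i) := by
  rw [catalan_succ]
  exact Fin.sum_univ_eq_sum_range (fun i => catalan i * catalan (n - i)) (n + 1)

lemma odd_iff_cast_two (n : ℕ) : Odd n ↔ (n : ZMod 2) = 1 := by
  rw [Nat.odd_iff, ← ZMod.natCast_mod]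
  rcases Nat.mod_two_eq_zero_or_one n with h | h <;> simp [h]

lemma catalan_even_index (m : ℕ) : ((catalan (2 * m + 2) : ℕ) : ZMod 2) = 0 := by
  have h : 2 * m + 2 = (2 * m + 1) + 1 := by ring
  rw [h, catalan_succ_range, Nat.cast_sum]
  refine Finset.sum_involution (fun a _ => 2 * m + 1 - a) ?_ ?_ ?_ ?_
  · intro a ha
    have ha' : a ≤ 2 * m + 1 := by simpa [Nat.lt_succ_iff] using ha
    have : 2 * m + 1 - (2 * m + 1 - a) = a := by omega
    rw [this, Nat.cast_mul, Nat.cast_mul, mul_comm]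
    exact CharTwo.add_self_eq_zero _
  · intro a ha _
    have ha' : a ≤ 2 * m + 1 := by simpa [Nat.lt_succ_iff] using ha
    omega
  · intro a ha
    simp [Nat.lt_succ_iff]
  · intro a ha
    have ha' : a ≤ 2 * m + 1 := by simpa [Nat.lt_succ_iff] using ha
    omega

lemma catalan_odd_index (m : ℕ) :
    ((catalan (2 * m + 1) : ℕ) : ZMod 2) = ((catalan m : ℕ) : ZMod 2) := by
  have h : 2 * m + 1 = (2 * m) + 1 := rfl
  rw [h, catalan_succ_range, Nat.cast_sum]
  have hm : m ∈ range (2 * m + 1) := by simp [Nat.lt_succ_iff]; omega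
  rw [← Finset.add_sum_erase _ _ hm]
  have h2 : ∑ i ∈ (range (2 * m + 1)).erase m,
      ((catalan i * catalan (2 * m - i) : ℕ) : ZMod 2) = 0 := by
    refine Finset.sum_involution (fun a _ => 2 * m - a) ?_ ?_ ?_ ?_
    · intro a ha
      have ha' : a ≤ 2 * m ∧ a ≠ m := by
        simp [Finset.mem_erase, Nat.lt_succ_iff] at ha; omega
      have : 2 * m - (2 * m - a) = a := by omega
      rw [this, Nat.cast_mul, Nat.cast_mul, mul_comm]
      exact CharTwo.add_self_eq_zero _
    · intro a ha _
      have ha' : a ≤ 2 * m ∧ a ≠ m := by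
        simp [Finset.mem_erase, Nat.lt_succ_iff] at ha; omega
      omega
    · intro a ha
      have ha' : a ≤ 2 * m ∧ a ≠ m := by
        simp [Finset.mem_erase, Nat.lt_succ_iff] at ha; omega
      simp [Finset.mem_erase, Nat.lt_succ_iff]
      omega
    · intro a ha
      have ha' : a ≤ 2 * m ∧ a ≠ m := by
        simp [Finset.mem_erase, Nat.lt_succ_iff] at ha; omega
      omega
  rw [h2, add_zero]
  have : 2 * m - m = m := by omega
  rw [this, Nat.cast_mul]
  have hx : ∀ x : ZMod 2, x * x = x := by decide
  exact hx _

theorem catalan_odd_iff (k : ℕ) :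
    Odd (catalan k) ↔ ∃ m : ℕ, k = 2 ^ m - 1 := by
  induction k using Nat.strong_induction_on with
  | _ k ih =>
    rcases Nat.even_or_odd k with hk | hk
    · rcases hk with ⟨m, rfl⟩
      rcases Nat.eq_zero_or_pos m with rfl | hm
      · simpa using ⟨0, rfl⟩
      · obtain ⟨m', rfl⟩ : ∃ m', m = m' + 1 := ⟨m - 1, by omega⟩
        have heq : (m' + 1) + (m' + 1) = 2 * m' + 2 := by ring
        rw [heq]
        constructor
        · intro hodd
          rw [odd_iff_cast_two, catalan_even_index] at hodd
          exact absurd hodd (by decide)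
        · rintro ⟨j, hj⟩
          exfalso
          rcases Nat.eq_zero_or_pos j with rfl | hj1
          · simp at hj
          · rw [show j = j - 1 + 1 from by omega, pow_succ] at hj
            have ht : 1 ≤ 2 ^ (j - 1) := Nat.one_le_two_pow
            omega
    · rcases hk with ⟨m, rfl⟩
      rw [odd_iff_cast_two, catalan_odd_index, ← odd_iff_cast_two]
      rw [ih m (by omega)]
      constructor
      · rintro ⟨j, rfl⟩
        refine ⟨j + 1, ?_⟩
        have ht : 1 ≤ 2 ^ j := Nat.one_le_two_pow
        rw [pow_succ]
        omega
      · rintro ⟨j, hj⟩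
        rcases Nat.eq_zero_or_pos j with rfl | hj1
        · simp at hj
        · refine ⟨j - 1, ?_⟩
          rw [show j = j - 1 + 1 from by omega, pow_succ] at hj
          have ht : 1 ≤ 2 ^ (j - 1) := Nat.one_le_two_pow
          omega
end

section
/- Let p be a prime and a, b integers with a ≢ b (mod p). For every m ≥ 1 and every d₁, d₂ ≥ 0 with d₁ + d₂ = m, the m vectors in F_p^m given by rows 0,…,d₁−1 of the m×m matrix M₁(a) mod p (columns 0..m−1) together with rows 0,…,d₂−1 of M₁(b) mod p are linearly independent over F_p. -/
namespace M1aux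

lemma s2_zero : s2 0 = 0 := by simp [s2]

lemma s2_rec (n : ℕ) (hn : 0 < n) : s2 n = n % 2 + s2 (n / 2) := by
  unfold s2
  rw [Nat.digits_def' (by norm_num) hn]
  simp [List.sum_cons]

lemma s2_two_mul (n : ℕ) : s2 (2 * n) = s2 n := by
  rcases Nat.eq_zero_or_pos n with h | h
  · simp [h, s2_zero]
  · rw [s2_rec (2*n) (by omega)]
    simp [Nat.mul_div_cancel_left, Nat.mul_mod_right]

lemma s2_two_mul_add_one (n : ℕ) : s2 (2 * n + 1) = s2 n + 1 := by
  rw [s2_rec (2*n+1) (by omega)]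
  have h1 : (2*n+1) % 2 = 1 := by omega
  have h2 : (2*n+1) / 2 = n := by omega
  rw [h1, h2]; ring

-- Lucas mod 2
lemma lucas2 (n k : ℕ) :
    Nat.choose n k % 2 = (Nat.choose (n % 2) (k % 2) * Nat.choose (n / 2) (k / 2)) % 2 := by
  haveI : Fact (Nat.Prime 2) := ⟨Nat.prime_two⟩
  exact Choose.choose_modEq_choose_mod_mul_choose_div_nat (p := 2)

lemma c2_ee (j i : ℕ) : Nat.choose (2*j) (2*i) % 2 = Nat.choose j i % 2 := by
  rw [lucas2]
  have h1 : (2*j) % 2 = 0 := by omega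
  have h2 : (2*i) % 2 = 0 := by omega
  have h3 : (2*j) / 2 = j := by omega
  have h4 : (2*i) / 2 = i := by omega
  rw [h1, h2, h3, h4]; simp

lemma c2_oe (j i : ℕ) : Nat.choose (2*j+1) (2*i) % 2 = Nat.choose j i % 2 := by
  rw [lucas2]
  have h1 : (2*j+1) % 2 = 1 := by omega
  have h2 : (2*i) % 2 = 0 := by omega
  have h3 : (2*j+1) / 2 = j := by omega
  have h4 : (2*i) / 2 = i := by omega
  rw [h1, h2, h3, h4]; simp

lemma c2_oo (j i : ℕ) : Nat.choose (2*j+1) (2*i+1) % 2 = Nat.choose j i % 2 := by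
  rw [lucas2]
  have h1 : (2*j+1) % 2 = 1 := by omega
  have h2 : (2*i+1) % 2 = 1 := by omega
  have h3 : (2*j+1) / 2 = j := by omega
  have h4 : (2*i+1) / 2 = i := by omega
  rw [h1, h2, h3, h4]; simp

lemma c2_eo (j i : ℕ) : Nat.choose (2*j) (2*i+1) % 2 = 0 := by
  rw [lucas2]
  have h1 : (2*j) % 2 = 0 := by omega
  have h2 : (2*i+1) % 2 = 1 := by omega
  rw [h1, h2]
  simp [Nat.choose]

lemma s2_le_of_c2 : ∀ j, ∀ i, Nat.choose j i % 2 = 1 → s2 i ≤ s2 j ∧ (i < j → s2 i < s2 j) := by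
  intro j
  induction j using Nat.strong_induction_on with
  | _ j IH =>
    intro i hc
    rcases Nat.eq_zero_or_pos j with hj | hj
    · subst hj
      have : i = 0 := by
        by_contra h
        rw [Nat.choose_eq_zero_of_lt (by omega)] at hc; simp at hc
      subst this; simp
    · obtain ⟨j', rfl | rfl⟩ : ∃ j', j = 2*j' ∨ j = 2*j'+1 := ⟨j/2, by omega⟩
      all_goals obtain ⟨i', rfl | rfl⟩ : ∃ i', i = 2*i' ∨ i = 2*i'+1 := ⟨i/2, by omega⟩
      · rw [c2_ee] at hc
        obtain ⟨h1, h2⟩ := IH j' (by omega) i' hc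
        rw [s2_two_mul, s2_two_mul]
        exact ⟨h1, fun h => h2 (by omega)⟩
      · rw [c2_eo] at hc; simp at hc
      · rw [c2_oe] at hc
        obtain ⟨h1, h2⟩ := IH j' (by omega) i' hc
        rw [s2_two_mul, s2_two_mul_add_one]
        omega
      · rw [c2_oo] at hc
        obtain ⟨h1, h2⟩ := IH j' (by omega) i' hc
        rw [s2_two_mul_add_one, s2_two_mul_add_one]
        exact ⟨by omega, fun h => by have := h2 (by omega); omega⟩
section Part2
variable {F : Type*} [Field F]

/-- The generic entry of `M1`. -/
noncomputable def T (x : F) (n i : ℕ) : F :=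
  ((Nat.choose n i % 2 : ℕ) : F) * x ^ (s2 n - s2 i)

lemma T_self0 (x : F) : T x 0 0 = 1 := by simp [T]

lemma T_ee (x : F) (n i : ℕ) : T x (2*n) (2*i) = T x n i := by
  unfold T
  rw [c2_ee, s2_two_mul, s2_two_mul]

lemma T_eo (x : F) (n i : ℕ) : T x (2*n) (2*i+1) = 0 := by
  simp [T, c2_eo]

lemma T_oo (x : F) (n i : ℕ) : T x (2*n+1) (2*i+1) = T x n i := by
  unfold T
  rw [c2_oo, s2_two_mul_add_one, s2_two_mul_add_one]
  have h : s2 n + 1 - (s2 i + 1) = s2 n - s2 i := by omega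
  rw [h]

lemma T_oe (x : F) (n i : ℕ) : T x (2*n+1) (2*i) = x * T x n i := by
  unfold T
  rw [c2_oe, s2_two_mul_add_one, s2_two_mul]
  rcases Nat.mod_two_eq_zero_or_one (Nat.choose n i) with h | h
  · rw [h]; simp
  · rw [h]
    have hle : s2 i ≤ s2 n := (s2_le_of_c2 n i h).1
    have : s2 n + 1 - s2 i = (s2 n - s2 i) + 1 := by omega
    rw [this, pow_succ]
    push_cast
    ring

lemma S1 (f : ℕ → F) (k : ℕ) :
    ∑ i ∈ Finset.range (2*k), f i
      = ∑ i ∈ Finset.range k, f (2*i) + ∑ i ∈ Finset.range k, f (2*i+1) := by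
  induction k with
  | zero => simp
  | succ k ih =>
    have h : 2*(k+1) = (2*k+1)+1 := by ring
    rw [h, Finset.sum_range_succ, Finset.sum_range_succ, ih,
      Finset.sum_range_succ, Finset.sum_range_succ]
    ring

lemma se_even (x : F) (v : ℕ → F) (k j' : ℕ) :
    ∑ i ∈ Finset.range (2*k), v i * T x (2*j') i
      = ∑ i ∈ Finset.range k, v (2*i) * T x j' i := by
  rw [S1 (fun i => v i * T x (2*j') i)]
  have h2 : ∑ i ∈ Finset.range k, v (2*i+1) * T x (2*j') (2*i+1) = 0 :=
    Finset.sum_eq_zero fun i _ => by rw [T_eo, mul_zero]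
  rw [h2, add_zero]
  exact Finset.sum_congr rfl fun i _ => by rw [T_ee]

lemma se_odd (x : F) (v : ℕ → F) (k j' : ℕ) :
    ∑ i ∈ Finset.range (2*k+1), v i * T x (2*j') i
      = ∑ i ∈ Finset.range (k+1), v (2*i) * T x j' i := by
  rw [Finset.sum_range_succ, Finset.sum_range_succ, se_even, T_ee]

lemma so_even (x : F) (v : ℕ → F) (k j' : ℕ) :
    ∑ i ∈ Finset.range (2*k), v i * T x (2*j'+1) i
      = x * ∑ i ∈ Finset.range k, v (2*i) * T x j' i
        + ∑ i ∈ Finset.range k, v (2*i+1) * T x j' i := by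
  rw [S1 (fun i => v i * T x (2*j'+1) i), Finset.mul_sum]
  congr 1
  · exact Finset.sum_congr rfl fun i _ => by rw [T_oe]; ring
  · exact Finset.sum_congr rfl fun i _ => by rw [T_oo]

lemma so_odd (x : F) (v : ℕ → F) (k j' : ℕ) :
    ∑ i ∈ Finset.range (2*k+1), v i * T x (2*j'+1) i
      = x * ∑ i ∈ Finset.range (k+1), v (2*i) * T x j' i
        + ∑ i ∈ Finset.range k, v (2*i+1) * T x j' i := by
  rw [Finset.sum_range_succ, so_even, T_oe,
    Finset.sum_range_succ (f := fun i => v (2 * i) * T x j' i)]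
  ring

end Part2
section Part3
variable {F : Type*} [Field F]

lemma core (A B : F) (hab : A ≠ B) :
    ∀ m : ℕ, ∀ d₁ d₂ : ℕ, d₁ + d₂ = m → ∀ α β : ℕ → F,
      (∀ j < m, (∑ i ∈ Finset.range d₁, α i * T A j i)
        + (∑ i ∈ Finset.range d₂, β i * T B j i) = 0) →
      (∀ i < d₁, α i = 0) ∧ (∀ i < d₂, β i = 0) := by
  intro m
  induction m using Nat.strong_induction_on with
  | _ m IH =>
  intro d₁ d₂ hd α β H
  rcases Nat.lt_or_ge m 2 with hm2 | hm2
  · -- base cases m = 0, m = 1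
    interval_cases m
    · exact ⟨fun i hi => by omega, fun i hi => by omega⟩
    · rcases (by omega : d₁ = 0 ∧ d₂ = 1 ∨ d₁ = 1 ∧ d₂ = 0) with ⟨h1, h2⟩ | ⟨h1, h2⟩ <;>
        subst h1 <;> subst h2
      · refine ⟨fun i hi => by omega, fun i hi => ?_⟩
        have hi0 : i = 0 := by omega
        subst hi0
        simpa [T_self0] using H 0 (by omega)
      · refine ⟨fun i hi => ?_, fun i hi => by omega⟩
        have hi0 : i = 0 := by omega
        subst hi0
        simpa [T_self0] using H 0 (by omega)
  · -- main induction step, m ≥ 2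
    obtain ⟨k₁, hk1 | hk1⟩ : ∃ k, d₁ = 2*k ∨ d₁ = 2*k+1 := ⟨d₁/2, by omega⟩ <;>
      obtain ⟨k₂, hk2 | hk2⟩ : ∃ k, d₂ = 2*k ∨ d₂ = 2*k+1 := ⟨d₂/2, by omega⟩ <;>
      subst hk1 <;> subst hk2
    · -- Case A : d₁ = 2k₁, d₂ = 2k₂
      set K := k₁ + k₂ with hK
      have hKm : K < m := by omega
      have Heven : ∀ j' < K, (∑ i ∈ Finset.range k₁, α (2*i) * T A j' i)
          + (∑ i ∈ Finset.range k₂, β (2*i) * T B j' i) = 0 := by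
        intro j' hj'
        have h := H (2*j') (by omega)
        rwa [se_even, se_even] at h
      obtain ⟨hαe, hβe⟩ := IH K hKm k₁ k₂ rfl _ _ Heven
      have Hodd : ∀ j' < K, (∑ i ∈ Finset.range k₁, α (2*i+1) * T A j' i)
          + (∑ i ∈ Finset.range k₂, β (2*i+1) * T B j' i) = 0 := by
        intro j' hj'
        have h := H (2*j'+1) (by omega)
        rw [so_even, so_even] at h
        have z1 : ∑ i ∈ Finset.range k₁, α (2*i) * T A j' i = 0 :=
          Finset.sum_eq_zero fun i hi => by
            rw [hαe i (Finset.mem_range.mp hi), zero_mul]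
        have z2 : ∑ i ∈ Finset.range k₂, β (2*i) * T B j' i = 0 :=
          Finset.sum_eq_zero fun i hi => by
            rw [hβe i (Finset.mem_range.mp hi), zero_mul]
        rw [z1, z2] at h
        linear_combination h
      obtain ⟨hαo, hβo⟩ := IH K hKm k₁ k₂ rfl _ _ Hodd
      constructor <;> intro i hi <;>
        obtain ⟨i', rfl | rfl⟩ : ∃ i', i = 2*i' ∨ i = 2*i'+1 := ⟨i/2, by omega⟩
      · exact hαe i' (by omega)
      · exact hαo i' (by omega)
      · exact hβe i' (by omega)
      · exact hβo i' (by omega)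
    · -- Case B : d₁ = 2k₁, d₂ = 2k₂+1  (m odd)
      set K := k₁ + k₂ with hK
      have Heven : ∀ j' < K + 1, (∑ i ∈ Finset.range k₁, α (2*i) * T A j' i)
          + (∑ i ∈ Finset.range (k₂+1), β (2*i) * T B j' i) = 0 := by
        intro j' hj'
        have h := H (2*j') (by omega)
        rwa [se_even, se_odd] at h
      obtain ⟨hαe, hβe⟩ := IH (K+1) (by omega) k₁ (k₂+1) (by omega) _ _ Heven
      have Hodd : ∀ j' < K, (∑ i ∈ Finset.range k₁, α (2*i+1) * T A j' i)
          + (∑ i ∈ Finset.range k₂, β (2*i+1) * T B j' i) = 0 := by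
        intro j' hj'
        have h := H (2*j'+1) (by omega)
        rw [so_even, so_odd] at h
        have z1 : ∑ i ∈ Finset.range k₁, α (2*i) * T A j' i = 0 :=
          Finset.sum_eq_zero fun i hi => by
            rw [hαe i (Finset.mem_range.mp hi), zero_mul]
        have z2 : ∑ i ∈ Finset.range (k₂+1), β (2*i) * T B j' i = 0 :=
          Finset.sum_eq_zero fun i hi => by
            rw [hβe i (Finset.mem_range.mp hi), zero_mul]
        rw [z1, z2] at h
        linear_combination h
      obtain ⟨hαo, hβo⟩ := IH K (by omega) k₁ k₂ rfl _ _ Hodd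
      constructor <;> intro i hi <;>
        obtain ⟨i', rfl | rfl⟩ : ∃ i', i = 2*i' ∨ i = 2*i'+1 := ⟨i/2, by omega⟩
      · exact hαe i' (by omega)
      · exact hαo i' (by omega)
      · exact hβe i' (by omega)
      · exact hβo i' (by omega)
    · -- Case C : d₁ = 2k₁+1, d₂ = 2k₂  (m odd)
      set K := k₁ + k₂ with hK
      have Heven : ∀ j' < K + 1, (∑ i ∈ Finset.range (k₁+1), α (2*i) * T A j' i)
          + (∑ i ∈ Finset.range k₂, β (2*i) * T B j' i) = 0 := by
        intro j' hj'
        have h := H (2*j') (by omega)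
        rwa [se_odd, se_even] at h
      obtain ⟨hαe, hβe⟩ := IH (K+1) (by omega) (k₁+1) k₂ (by omega) _ _ Heven
      have Hodd : ∀ j' < K, (∑ i ∈ Finset.range k₁, α (2*i+1) * T A j' i)
          + (∑ i ∈ Finset.range k₂, β (2*i+1) * T B j' i) = 0 := by
        intro j' hj'
        have h := H (2*j'+1) (by omega)
        rw [so_odd, so_even] at h
        have z1 : ∑ i ∈ Finset.range (k₁+1), α (2*i) * T A j' i = 0 :=
          Finset.sum_eq_zero fun i hi => by
            rw [hαe i (Finset.mem_range.mp hi), zero_mul]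
        have z2 : ∑ i ∈ Finset.range k₂, β (2*i) * T B j' i = 0 :=
          Finset.sum_eq_zero fun i hi => by
            rw [hβe i (Finset.mem_range.mp hi), zero_mul]
        rw [z1, z2] at h
        linear_combination h
      obtain ⟨hαo, hβo⟩ := IH K (by omega) k₁ k₂ rfl _ _ Hodd
      constructor <;> intro i hi <;>
        obtain ⟨i', rfl | rfl⟩ : ∃ i', i = 2*i' ∨ i = 2*i'+1 := ⟨i/2, by omega⟩
      · exact hαe i' (by omega)
      · exact hαo i' (by omega)
      · exact hβe i' (by omega)
      · exact hβo i' (by omega)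
    · -- Case D : d₁ = 2k₁+1, d₂ = 2k₂+1  (m even), uses A ≠ B
      set K := k₁ + k₂ + 1 with hK
      have hKm : K < m := by omega
      have Heven : ∀ j' < K, (∑ i ∈ Finset.range (k₁+1), α (2*i) * T A j' i)
          + (∑ i ∈ Finset.range (k₂+1), β (2*i) * T B j' i) = 0 := by
        intro j' hj'
        have h := H (2*j') (by omega)
        rwa [se_odd, se_odd] at h
      have Hodd : ∀ j' < K,
          A * (∑ i ∈ Finset.range (k₁+1), α (2*i) * T A j' i)
            + (∑ i ∈ Finset.range k₁, α (2*i+1) * T A j' i)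
          + (B * (∑ i ∈ Finset.range (k₂+1), β (2*i) * T B j' i)
            + (∑ i ∈ Finset.range k₂, β (2*i+1) * T B j' i)) = 0 := by
        intro j' hj'
        have h := H (2*j'+1) (by omega)
        rwa [so_odd, so_odd] at h
      -- first combined application: subtract A times Heven
      set γ : ℕ → F := fun i => (B - A) * β (2*i) + (if i < k₂ then β (2*i+1) else 0)
        with hγ
      have Hγexp : ∀ j', ∑ i ∈ Finset.range (k₂+1), γ i * T B j' i
          = (B - A) * (∑ i ∈ Finset.range (k₂+1), β (2*i) * T B j' i)
            + (∑ i ∈ Finset.range k₂, β (2*i+1) * T B j' i) := by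
        intro j'
        have h1 : ∑ i ∈ Finset.range (k₂+1), γ i * T B j' i
            = ∑ i ∈ Finset.range (k₂+1),
                (((B - A) * β (2*i)) * T B j' i
                  + (if i < k₂ then β (2*i+1) else 0) * T B j' i) :=
          Finset.sum_congr rfl fun i _ => by rw [hγ]; ring
        rw [h1, Finset.sum_add_distrib]
        congr 1
        · rw [Finset.mul_sum]
          exact Finset.sum_congr rfl fun i _ => by ring
        · rw [Finset.sum_range_succ, if_neg (by omega), zero_mul, add_zero]
          exact Finset.sum_congr rfl fun i hi => by
            rw [if_pos (Finset.mem_range.mp hi)]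
      have H1 : ∀ j' < K, (∑ i ∈ Finset.range k₁, α (2*i+1) * T A j' i)
          + (∑ i ∈ Finset.range (k₂+1), γ i * T B j' i) = 0 := by
        intro j' hj'
        rw [Hγexp j']
        linear_combination (Hodd j' hj') - A * (Heven j' hj')
      obtain ⟨hαo, hγ0⟩ := IH K hKm k₁ (k₂+1) (by omega) _ _ H1
      -- second combined application: subtract B times Heven
      set δ : ℕ → F := fun i => (A - B) * α (2*i) + (if i < k₁ then α (2*i+1) else 0)
        with hδ
      have Hδexp : ∀ j', ∑ i ∈ Finset.range (k₁+1), δ i * T A j' i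
          = (A - B) * (∑ i ∈ Finset.range (k₁+1), α (2*i) * T A j' i)
            + (∑ i ∈ Finset.range k₁, α (2*i+1) * T A j' i) := by
        intro j'
        have h1 : ∑ i ∈ Finset.range (k₁+1), δ i * T A j' i
            = ∑ i ∈ Finset.range (k₁+1),
                (((A - B) * α (2*i)) * T A j' i
                  + (if i < k₁ then α (2*i+1) else 0) * T A j' i) :=
          Finset.sum_congr rfl fun i _ => by rw [hδ]; ring
        rw [h1, Finset.sum_add_distrib]
        congr 1
        · rw [Finset.mul_sum]
          exact Finset.sum_congr rfl fun i _ => by ring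
        · rw [Finset.sum_range_succ, if_neg (by omega), zero_mul, add_zero]
          exact Finset.sum_congr rfl fun i hi => by
            rw [if_pos (Finset.mem_range.mp hi)]
      have H2 : ∀ j' < K, (∑ i ∈ Finset.range (k₁+1), δ i * T A j' i)
          + (∑ i ∈ Finset.range k₂, β (2*i+1) * T B j' i) = 0 := by
        intro j' hj'
        rw [Hδexp j']
        linear_combination (Hodd j' hj') - B * (Heven j' hj')
      obtain ⟨hδ0, hβo⟩ := IH K hKm (k₁+1) k₂ (by omega) _ _ H2
      have hBA : B - A ≠ 0 := sub_ne_zero.mpr (Ne.symm hab)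
      have hAB : A - B ≠ 0 := sub_ne_zero.mpr hab
      have hβe : ∀ i < k₂ + 1, β (2*i) = 0 := by
        intro i hi
        have h := hγ0 i hi
        rw [hγ] at h
        simp only at h
        rcases Nat.lt_or_ge i k₂ with hik | hik
        · rw [if_pos hik, hβo i hik, add_zero] at h
          exact (mul_eq_zero.mp h).resolve_left hBA
        · rw [if_neg (by omega), add_zero] at h
          exact (mul_eq_zero.mp h).resolve_left hBA
      have hαe : ∀ i < k₁ + 1, α (2*i) = 0 := by
        intro i hi
        have h := hδ0 i hi
        rw [hδ] at h
        simp only at h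
        rcases Nat.lt_or_ge i k₁ with hik | hik
        · rw [if_pos hik, hαo i hik, add_zero] at h
          exact (mul_eq_zero.mp h).resolve_left hAB
        · rw [if_neg (by omega), add_zero] at h
          exact (mul_eq_zero.mp h).resolve_left hAB
      constructor <;> intro i hi <;>
        obtain ⟨i', rfl | rfl⟩ : ∃ i', i = 2*i' ∨ i = 2*i'+1 := ⟨i/2, by omega⟩
      · exact hαe i' (by omega)
      · exact hαo i' (by omega)
      · exact hβe i' (by omega)
      · exact hβo i' (by omega)
end Part3
lemma M1_cast (p : ℕ) [Fact (Nat.Prime p)] (a : ℤ) (i j : ℕ) :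
    ((M1 a i j : ℤ) : ZMod p) = T ((a : ZMod p)) j i := by
  unfold M1 T
  by_cases ha : a = 0
  · subst ha
    simp only [if_pos rfl, Int.cast_zero]
    by_cases hij : i = j
    · subst hij
      simp [Nat.choose_self]
    · rw [if_neg hij]
      rcases Nat.mod_two_eq_zero_or_one (Nat.choose j i) with h | h
      · rw [h]; simp
      · have hij2 : i < j := by
          rcases Nat.lt_or_ge i j with h' | h'
          · exact h'
          · have : i ≠ j := hij
            have : j < i := by omega
            rw [Nat.choose_eq_zero_of_lt this] at h
            simp at h
        have := (s2_le_of_c2 j i h).2 hij2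
        rw [h]
        simp [zero_pow (show s2 j - s2 i ≠ 0 by omega)]
  · rw [if_neg ha]
    rw [Int.cast_mul, Int.cast_pow, Int.cast_natCast]
end M1aux

theorem M1ab_rows_linearIndependent (p : ℕ) (hp : p.Prime) (a b : ℤ)
    (hab : ¬ ((a : ZMod p) = (b : ZMod p)))
    (m d₁ d₂ : ℕ) (hm : 1 ≤ m) (hd : d₁ + d₂ = m) :
    LinearIndependent (ZMod p)
      (Sum.elim
        (fun i : Fin d₁ => fun j : Fin m => ((M1 a (i : ℕ) (j : ℕ) : ℤ) : ZMod p))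
        (fun i : Fin d₂ => fun j : Fin m => ((M1 b (i : ℕ) (j : ℕ) : ℤ) : ZMod p))) := by
  haveI : Fact p.Prime := ⟨hp⟩
  rw [Fintype.linearIndependent_iff]
  intro g hg
  set α : ℕ → ZMod p := fun i => if h : i < d₁ then g (Sum.inl ⟨i, h⟩) else 0 with hα
  set β : ℕ → ZMod p := fun i => if h : i < d₂ then g (Sum.inr ⟨i, h⟩) else 0 with hβ
  have hgl : ∀ i : Fin d₁, g (Sum.inl i) = α (i : ℕ) := by
    intro i
    rw [hα]
    simp only [i.isLt, dif_pos, Fin.eta]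
  have hgr : ∀ i : Fin d₂, g (Sum.inr i) = β (i : ℕ) := by
    intro i
    rw [hβ]
    simp only [i.isLt, dif_pos, Fin.eta]
  have Hj : ∀ j < m, (∑ i ∈ Finset.range d₁, α i * M1aux.T ((a : ZMod p)) j i)
      + (∑ i ∈ Finset.range d₂, β i * M1aux.T ((b : ZMod p)) j i) = 0 := by
    intro j hj
    have h := congrFun hg ⟨j, hj⟩
    rw [Finset.sum_apply] at h
    rw [Fintype.sum_sum_type] at h
    simp only [Sum.elim_inl, Sum.elim_inr, Pi.smul_apply, smul_eq_mul] at h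
    have e1 : ∀ i : Fin d₁, g (Sum.inl i) * ((M1 a (i : ℕ) j : ℤ) : ZMod p)
        = α (i : ℕ) * M1aux.T ((a : ZMod p)) j (i : ℕ) := by
      intro i
      rw [hgl i, M1aux.M1_cast]
    have e2 : ∀ i : Fin d₂, g (Sum.inr i) * ((M1 b (i : ℕ) j : ℤ) : ZMod p)
        = β (i : ℕ) * M1aux.T ((b : ZMod p)) j (i : ℕ) := by
      intro i
      rw [hgr i, M1aux.M1_cast]
    calc (∑ i ∈ Finset.range d₁, α i * M1aux.T ((a : ZMod p)) j i)
          + (∑ i ∈ Finset.range d₂, β i * M1aux.T ((b : ZMod p)) j i)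
        = (∑ i : Fin d₁, α (i : ℕ) * M1aux.T ((a : ZMod p)) j (i : ℕ))
          + (∑ i : Fin d₂, β (i : ℕ) * M1aux.T ((b : ZMod p)) j (i : ℕ)) := by
          rw [← Fin.sum_univ_eq_sum_range (fun i => α i * M1aux.T ((a : ZMod p)) j i) d₁,
            ← Fin.sum_univ_eq_sum_range (fun i => β i * M1aux.T ((b : ZMod p)) j i) d₂]
      _ = 0 := by
          rw [← Finset.sum_congr rfl (fun i _ => e1 i),
            ← Finset.sum_congr rfl (fun i _ => e2 i)]
          simpa using h
  obtain ⟨hα0, hβ0⟩ := M1aux.core ((a : ZMod p)) ((b : ZMod p)) hab m d₁ d₂ hd α β Hj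
  intro i
  rcases i with i | i
  · rw [hgl i]
    exact hα0 (i : ℕ) i.isLt
  · rw [hgr i]
    exact hβ0 (i : ℕ) i.isLt
end
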